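/- Propagation of the integrability condition (Lemma 2.1). Let p_t(z) := (2πt)^{−1/2} e^{−z²/(2t)}. Suppose u : [0,∞) × ℝ → [0,∞) is such that u(0,·) is bounded and measurable with ∫_0^∞ y e^{√2 y} u(0,y) dy < ∞, and suppose that for all t > 0 and x ∈ ℝ the Feynman–Kac domination u(t,x) ≤ e^t ∫_ℝ u(0,z) p_t(x − z) dz holds (as is the case for solutions of the KPP equation, since −ψ(λ)/λ ≤ 1). Then for every t > 0 one has ∫_0^∞ y e^{√2 y} u(t,y) dy < ∞, and also ∫_0^∞ u(t, √2 t + y) y e^{√2 y} dy < ∞. -/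

import Mathlib

open MeasureTheory Set Filter Topology

/-- The centered Gaussian density with variance t: p_t(z) = (2πt)^{−1/2} e^{−z²/(2t)}. -/
noncomputable def gaussDensity (t z : ℝ) : ℝ :=
  (Real.sqrt (2 * Real.pi * t))⁻¹ * Real.exp (-z ^ 2 / (2 * t))

open ENNReal Real

/-! For `y ≥ 0` the weight `y e^{√2 y}` splits along `y = z + (y - z)`:
`y e^{√2 y} ≤ (1 + z⁺) e^{√2 z} · (1 + |y - z|) e^{√2 |y - z|}`.
With the Feynman–Kac domination and Tonelli, `∫₀^∞ y e^{√2 y} u(t,y) dy` is at most `e^t` times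
the product of `∫ (1 + z⁺) e^{√2 z} u(0,z) dz` and `∫ (1 + |w|) e^{√2 |w|} p_t(w) dw`. The first
factor is finite because `u(0,·)` is bounded on `z ≤ 1` and `1 + z ≤ 2z` on `z > 1`; the second
because the Gaussian beats every exponential. The shifted integral is dominated by the first one,
as the weight `y e^{√2 y}` is increasing. -/

theorem MeasureTheory.ofReal_integral_le_lintegral_ofReal {α : Type*} [MeasurableSpace α]
    {μ : Measure α} (f : α → ℝ) :
    ENNReal.ofReal (∫ x, f x ∂μ) ≤ ∫⁻ x, ENNReal.ofReal (f x) ∂μ := by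
  by_cases hf : Integrable f μ
  · rw [integral_eq_lintegral_pos_part_sub_lintegral_neg_part hf]
    exact (ofReal_le_ofReal (sub_le_self _ toReal_nonneg)).trans ofReal_toReal_le
  · simp [integral_undef hf]

section Convolution

variable {G : Type*} {mG : MeasurableSpace G} [Group G] [MeasurableMul₂ G] [MeasurableInv G]
  {μ : Measure G} [μ.IsMulLeftInvariant] [SFinite μ]

@[to_additive]
theorem MeasureTheory.lintegral_mlconvolution {f g : G → ℝ≥0∞} (hf : AEMeasurable f μ)
    (hg : AEMeasurable g μ) :
    ∫⁻ x, (f ⋆ₘₗ[μ] g) x ∂μ = (∫⁻ x, f x ∂μ) * ∫⁻ x, g x ∂μ := by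
  simp only [mlconvolution_def]
  rw [lintegral_lintegral_swap (by fun_prop), ← lintegral_mul_const'' _ hf]
  congr with y
  rw [lintegral_const_mul'' (f y) (f := fun x ↦ g (y⁻¹ * x))
    (hg.comp_quasiMeasurePreserving (measurePreserving_mul_left μ y⁻¹).quasiMeasurePreserving),
    lintegral_mul_left_eq_self g y⁻¹]

end Convolution

lemma gaussDensity_nonneg (t z : ℝ) : 0 ≤ gaussDensity t z := by
  unfold gaussDensity; positivity

@[fun_prop]
lemma continuous_gaussDensity (t : ℝ) : Continuous (gaussDensity t) := by
  unfold gaussDensity; fun_prop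

lemma integrable_exp_mul_abs_mul_gaussDensity {t : ℝ} (ht : 0 < t) (a : ℝ) :
    Integrable fun w ↦ exp (a * |w|) * gaussDensity t w := by
  refine ((integrable_exp_neg_mul_sq (b := 1 / (4 * t)) (by positivity)).const_mul
    ((√(2 * π * t))⁻¹ * exp (a ^ 2 * t))).mono'
    (by fun_prop : Continuous _).aestronglyMeasurable (.of_forall fun w ↦ ?_)
  have hexp : a * |w| + -w ^ 2 / (2 * t) ≤ a ^ 2 * t + -(1 / (4 * t)) * w ^ 2 := by
    have key : a ^ 2 * t + -(1 / (4 * t)) * w ^ 2 - (a * |w| + -w ^ 2 / (2 * t)) =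
        (|w| - 2 * a * t) ^ 2 / (4 * t) := by
      rw [← sq_abs w]
      field_simp
      ring
    linarith [show 0 ≤ (|w| - 2 * a * t) ^ 2 / (4 * t) by positivity]
  rw [norm_of_nonneg (by unfold gaussDensity; positivity), gaussDensity, mul_left_comm,
    mul_assoc, ← Real.exp_add, mul_assoc, ← Real.exp_add]
  gcongr

noncomputable def posPartExpWeight (c z : ℝ) : ℝ := (1 + max z 0) * exp (c * z)

noncomputable def absExpWeight (c w : ℝ) : ℝ := (1 + |w|) * exp (c * |w|)

lemma posPartExpWeight_nonneg (c z : ℝ) : 0 ≤ posPartExpWeight c z := by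
  unfold posPartExpWeight; positivity

lemma mul_exp_le_posPartExpWeight_mul_absExpWeight {c : ℝ} (hc : 0 ≤ c) (y z : ℝ) :
    y * exp (c * y) ≤ posPartExpWeight c z * absExpWeight c (y - z) := by
  have hy : y ≤ (1 + max z 0) * (1 + |y - z|) := by
    nlinarith [le_max_left z 0, le_max_right z 0, le_abs_self (y - z), abs_nonneg (y - z)]
  have he : exp (c * y) ≤ exp (c * z) * exp (c * |y - z|) := by
    rw [← exp_add]
    gcongr
    nlinarith [le_abs_self (y - z)]
  calc y * exp (c * y) ≤ ((1 + max z 0) * (1 + |y - z|)) * (exp (c * z) * exp (c * |y - z|)) :=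
        mul_le_mul hy he (exp_pos _).le (by positivity)
    _ = posPartExpWeight c z * absExpWeight c (y - z) := by
        unfold posPartExpWeight absExpWeight; ring

lemma absExpWeight_le_exp (c w : ℝ) : absExpWeight c w ≤ exp ((c + 1) * |w|) := by
  rw [absExpWeight, add_one_mul, exp_add, mul_comm, add_comm 1]
  gcongr
  exact add_one_le_exp _

lemma lintegral_absExpWeight_mul_gaussDensity_lt_top {t : ℝ} (ht : 0 < t) (c : ℝ) :
    ∫⁻ w, ENNReal.ofReal (absExpWeight c w) * ENNReal.ofReal (gaussDensity t w) < ⊤ := by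
  refine lt_of_le_of_lt (lintegral_mono fun w ↦ ?_)
    (integrable_exp_mul_abs_mul_gaussDensity ht (c + 1)).lintegral_lt_top
  rw [← ofReal_mul' (gaussDensity_nonneg t w)]
  gcongr
  · exact gaussDensity_nonneg t w
  · exact absExpWeight_le_exp c w

lemma lintegral_posPartExpWeight_mul_lt_top {c C : ℝ} (hc : 0 < c) {f : ℝ → ℝ}
    (hf : ∀ x, f x ≤ C) (h : ∫⁻ y in Ioi 0, ENNReal.ofReal (y * exp (c * y) * f y) < ⊤) :
    ∫⁻ z, ENNReal.ofReal (posPartExpWeight c z) * ENNReal.ofReal (f z) < ⊤ := by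
  rw [← setLIntegral_univ, ← Iic_union_Ioi (a := 1)]
  refine (lintegral_union_le _ _ _).trans_lt (add_lt_top.2 ⟨?_, ?_⟩)
  · have hbound : ∀ z ∈ Iic (1 : ℝ), ENNReal.ofReal (posPartExpWeight c z) * ENNReal.ofReal (f z)
        ≤ ENNReal.ofReal (2 * exp (c * z)) * ENNReal.ofReal C := by
      intro z hz
      gcongr
      · rw [posPartExpWeight]
        gcongr
        linarith [max_le (mem_Iic.1 hz) zero_le_one]
      · exact hf z
    refine (setLIntegral_mono' measurableSet_Iic hbound).trans_lt ?_
    rw [lintegral_mul_const' _ _ ofReal_ne_top]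
    exact mul_lt_top ((integrableOn_exp_mul_Iic hc 1).const_mul 2).lintegral_lt_top ofReal_lt_top
  · have hbound : ∀ z ∈ Ioi (1 : ℝ), ENNReal.ofReal (posPartExpWeight c z) * ENNReal.ofReal (f z)
        ≤ ENNReal.ofReal 2 * ENNReal.ofReal (z * exp (c * z) * f z) := by
      intro z (hz : 1 < z)
      rw [ofReal_mul (by positivity), ← mul_assoc, ← ofReal_mul zero_le_two, ← mul_assoc,
        posPartExpWeight, max_eq_left (by linarith)]
      gcongr
      linarith
    refine (setLIntegral_mono' measurableSet_Ioi hbound).trans_lt ?_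
    rw [lintegral_const_mul' _ _ ofReal_ne_top]
    exact mul_lt_top ofReal_lt_top ((lintegral_mono_set (Ioi_subset_Ioi zero_le_one)).trans_lt h)

lemma ofReal_mul_exp_mul_le_lconvolution {c K : ℝ} (hc : 0 ≤ c) (hK : 0 ≤ K) {f g v : ℝ → ℝ}
    (hg : ∀ w, 0 ≤ g w) {y : ℝ} (hy : 0 ≤ y) (hv : v y ≤ K * ∫ z, f z * g (y - z)) :
    ENNReal.ofReal (y * exp (c * y) * v y) ≤ ENNReal.ofReal K *
      ((fun z ↦ ENNReal.ofReal (posPartExpWeight c z) * ENNReal.ofReal (f z)) ⋆ₗ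
        fun w ↦ ENNReal.ofReal (absExpWeight c w) * ENNReal.ofReal (g w)) y := by
  have hyw : 0 ≤ y * exp (c * y) := by positivity
  have hkernel : ∀ z, ENNReal.ofReal (y * exp (c * y)) * ENNReal.ofReal (f z * g (y - z)) ≤
      ENNReal.ofReal (posPartExpWeight c z) * ENNReal.ofReal (f z) *
        (ENNReal.ofReal (absExpWeight c (-z + y)) * ENNReal.ofReal (g (-z + y))) := by
    intro z
    have hweight : ENNReal.ofReal (y * exp (c * y)) ≤
        ENNReal.ofReal (posPartExpWeight c z) * ENNReal.ofReal (absExpWeight c (y - z)) := by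
      rw [← ofReal_mul (posPartExpWeight_nonneg c z)]
      exact ofReal_le_ofReal (mul_exp_le_posPartExpWeight_mul_absExpWeight hc y z)
    rw [ofReal_mul' (hg _), neg_add_eq_sub]
    calc _ ≤ ENNReal.ofReal (posPartExpWeight c z) * ENNReal.ofReal (absExpWeight c (y - z)) *
          (ENNReal.ofReal (f z) * ENNReal.ofReal (g (y - z))) := by gcongr
      _ = _ := by ring
  calc ENNReal.ofReal (y * exp (c * y) * v y)
      ≤ ENNReal.ofReal (y * exp (c * y)) * (ENNReal.ofReal K *
          ENNReal.ofReal (∫ z, f z * g (y - z))) := by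
        rw [ofReal_mul hyw, ← ofReal_mul hK]
        gcongr
    _ ≤ ENNReal.ofReal K * ∫⁻ z, ENNReal.ofReal (y * exp (c * y)) *
          ENNReal.ofReal (f z * g (y - z)) := by
        rw [lintegral_const_mul' _ _ ofReal_ne_top, mul_left_comm]
        gcongr
        exact ofReal_integral_le_lintegral_ofReal _
    _ ≤ _ := by
        rw [lconvolution_def]
        exact mul_le_mul_right (lintegral_mono hkernel) _

lemma setLIntegral_mul_exp_le_lintegral_lconvolution {c K : ℝ} (hc : 0 ≤ c) (hK : 0 ≤ K)
    {f g v : ℝ → ℝ} (hg : ∀ w, 0 ≤ g w) (hv : ∀ x, v x ≤ K * ∫ z, f z * g (x - z)) :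
    ∫⁻ y in Ioi 0, ENNReal.ofReal (y * exp (c * y) * v y) ≤ ENNReal.ofReal K *
      ∫⁻ y, ((fun z ↦ ENNReal.ofReal (posPartExpWeight c z) * ENNReal.ofReal (f z)) ⋆ₗ
        fun w ↦ ENNReal.ofReal (absExpWeight c w) * ENNReal.ofReal (g w)) y := by
  rw [← lintegral_const_mul' _ _ ofReal_ne_top]
  exact (setLIntegral_mono' measurableSet_Ioi fun y hy ↦
    ofReal_mul_exp_mul_le_lconvolution hc hK hg (le_of_lt hy) (hv y)).trans
    (setLIntegral_le_lintegral _ _)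

lemma setLIntegral_Ioi_comp_add_lt_top {c s : ℝ} (hc : 0 ≤ c) (hs : 0 ≤ s) {v : ℝ → ℝ}
    (h : ∫⁻ y in Ioi 0, ENNReal.ofReal (y * exp (c * y) * v y) < ⊤) :
    ∫⁻ y in Ioi 0, ENNReal.ofReal (v (s + y) * (y * exp (c * y))) < ⊤ := by
  set F := (Ioi (0 : ℝ)).indicator fun y ↦ ENNReal.ofReal (y * exp (c * y) * v y)
  have hshift : ∀ y ∈ Ioi (0 : ℝ),
      ENNReal.ofReal (v (s + y) * (y * exp (c * y))) ≤ F (s + y) := by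
    intro y (hy : 0 < y)
    simp only [F]
    rw [indicator_of_mem (show s + y ∈ Ioi 0 from add_pos_of_nonneg_of_pos hs hy),
      ofReal_mul' (by positivity : 0 ≤ y * exp (c * y)),
      ofReal_mul (by positivity : 0 ≤ (s + y) * exp (c * (s + y))), mul_comm]
    gcongr
    · linarith
    · linarith
  calc ∫⁻ y in Ioi 0, ENNReal.ofReal (v (s + y) * (y * exp (c * y)))
      ≤ ∫⁻ y, F (s + y) := (setLIntegral_mono' measurableSet_Ioi hshift).trans
        (setLIntegral_le_lintegral _ _)
    _ = ∫⁻ y in Ioi 0, ENNReal.ofReal (y * exp (c * y) * v y) := by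
        rw [lintegral_add_left_eq_self F s, lintegral_indicator measurableSet_Ioi]
    _ < ⊤ := h

theorem integrability_propagation_general
    (u : ℝ → ℝ → ℝ)
    (hmeas : Measurable (u 0))
    (hbdd : ∃ C : ℝ, ∀ x : ℝ, u 0 x ≤ C)
    (hint : ∫⁻ y in Ioi (0 : ℝ),
      ENNReal.ofReal (y * Real.exp (Real.sqrt 2 * y) * u 0 y) < ⊤)
    (hdom : ∀ t : ℝ, 0 < t → ∀ x : ℝ,
      u t x ≤ Real.exp t * ∫ z : ℝ, u 0 z * gaussDensity t (x - z)) :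
    ∀ t : ℝ, 0 < t →
      (∫⁻ y in Ioi (0 : ℝ),
        ENNReal.ofReal (y * Real.exp (Real.sqrt 2 * y) * u t y) < ⊤) ∧
      (∫⁻ y in Ioi (0 : ℝ),
        ENNReal.ofReal (u t (Real.sqrt 2 * t + y) * (y * Real.exp (Real.sqrt 2 * y))) < ⊤) := by
  intro t ht
  obtain ⟨C, hC⟩ := hbdd
  have hc : (0 : ℝ) < √2 := by positivity
  have hbound := setLIntegral_mul_exp_le_lintegral_lconvolution hc.le (exp_pos t).le
    (gaussDensity_nonneg t) (hdom t ht)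
  rw [lintegral_lconvolution (by unfold posPartExpWeight; fun_prop)
    (by unfold absExpWeight; fun_prop)] at hbound
  have hfirst := hbound.trans_lt (mul_lt_top ofReal_lt_top (mul_lt_top
    (lintegral_posPartExpWeight_mul_lt_top hc hC hint)
    (lintegral_absExpWeight_mul_gaussDensity_lt_top ht _)))
  exact ⟨hfirst, setLIntegral_Ioi_comp_add_lt_top hc.le (by positivity) hfirst⟩

/-- Propagation of the integrability condition (Lemma 2.1): if u ≥ 0, u(0,·) is bounded
measurable with ∫₀^∞ y e^{√2 y} u(0,y) dy < ∞, and u(t,x) ≤ e^t ∫ u(0,z) p_t(x−z) dz for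
all t > 0 and x, then for every t > 0, ∫₀^∞ y e^{√2 y} u(t,y) dy < ∞ and
∫₀^∞ u(t, √2 t + y) y e^{√2 y} dy < ∞. -/
theorem integrability_propagation
    (u : ℝ → ℝ → ℝ)
    (hpos : ∀ t : ℝ, 0 ≤ t → ∀ x : ℝ, 0 ≤ u t x)
    (hmeas : Measurable (u 0))
    (hbdd : ∃ C : ℝ, ∀ x : ℝ, u 0 x ≤ C)
    (hint : ∫⁻ y in Ioi (0 : ℝ),
      ENNReal.ofReal (y * Real.exp (Real.sqrt 2 * y) * u 0 y) < ⊤)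
    (hdom : ∀ t : ℝ, 0 < t → ∀ x : ℝ,
      u t x ≤ Real.exp t * ∫ z : ℝ, u 0 z * gaussDensity t (x - z)) :
    ∀ t : ℝ, 0 < t →
      (∫⁻ y in Ioi (0 : ℝ),
        ENNReal.ofReal (y * Real.exp (Real.sqrt 2 * y) * u t y) < ⊤) ∧
      (∫⁻ y in Ioi (0 : ℝ),
        ENNReal.ofReal (u t (Real.sqrt 2 * t + y) * (y * Real.exp (Real.sqrt 2 * y))) < ⊤) :=
  integrability_propagation_general u hmeas hbdd hint hdom
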